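/- arXiv:2306.14044 — 2 statements merged into one kernel-verified Lean document; each statement's English description precedes it below -/
import Mathlib

section
/- For every q > 0, the sequence n ↦ Γ(qn+1)/Γ(q(n−1)+1) is strictly increasing on the positive integers: for all integers 1 ≤ m < n, Γ(qm+1)/Γ(q(m−1)+1) < Γ(qn+1)/Γ(q(n−1)+1). -/
/-!
`log ∘ Γ` is strictly convex on `(0, ∞)`: it is the convex function `x ↦ log Γ(x + 1)` minus the
strictly concave `log`. For a strictly convex function the increment `f (t + q) - f t` over a step
of fixed length `q > 0` strictly increases with `t`, so `Γ(t + q) / Γ(t)` strictly increases on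
`(0, ∞)`. The theorem is the case `q > 0`, `t = q (m - 1) + 1 < s = q (n - 1) + 1`.
-/

open Set

theorem StrictConvexOn.fwdDiff_lt {𝕜 : Type*} [Field 𝕜] [LinearOrder 𝕜] [IsStrictOrderedRing 𝕜]
    {s : Set 𝕜} {f : 𝕜 → 𝕜} (hf : StrictConvexOn 𝕜 s f) {x y h : 𝕜} (hx : x ∈ s)
    (hy : y + h ∈ s) (hxy : x < y) (hh : 0 < h) :
    fwdDiff h f x < fwdDiff h f y := by
  have hxh : x + h ∈ s := hf.1.ordConnected.out hx hy ⟨by linarith, by linarith⟩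
  have hy' : y ∈ s := hf.1.ordConnected.out hx hy ⟨hxy.le, by linarith⟩
  -- slope on `[x, x + h]` < slope on `[x, y + h]` < slope on `[y, y + h]`
  have through_x := hf.secant_strict_mono hx hxh hy (by linarith) (by linarith) (by linarith)
  have through_yh := hf.secant_strict_mono hy hx hy' (by linarith) (by linarith) hxy
  have hxyh : 0 < y + h - x := by linarith
  rw [add_sub_cancel_left, div_lt_div_iff₀ hh hxyh] at through_x
  rw [← neg_div_neg_eq (f x - _), ← neg_div_neg_eq (f y - _), neg_sub, neg_sub, neg_sub, neg_sub,
    add_sub_cancel_left, div_lt_div_iff₀ hxyh hh] at through_yh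
  exact lt_of_mul_lt_mul_right (through_x.trans through_yh) hxyh.le

namespace Real

theorem strictConvexOn_log_Gamma : StrictConvexOn ℝ (Ioi 0) (log ∘ Gamma) := by
  have shifted : ConvexOn ℝ (Ioi 0) (fun x => log (Gamma (1 + x))) :=
    (convexOn_log_Gamma.translate_right 1).subset (fun x (hx : 0 < x) => by
      simp only [mem_preimage, mem_Ioi]; linarith) (convex_Ioi 0)
  refine (shifted.sub_strictConcaveOn strictConcaveOn_log_Ioi).congr fun x (hx : 0 < x) => ?_
  simp only [Pi.sub_apply, Function.comp_apply]
  rw [add_comm, Gamma_add_one hx.ne', log_mul hx.ne' (Gamma_pos_of_pos hx).ne']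
  ring

theorem Gamma_add_div_Gamma_strictMonoOn {q : ℝ} (hq : 0 < q) :
    StrictMonoOn (fun t => Gamma (t + q) / Gamma t) (Ioi 0) := by
  intro t (ht : 0 < t) s (hs : 0 < s) hts
  have hΓ : ∀ {x : ℝ}, 0 < x → 0 < Gamma (x + q) / Gamma x := fun hx =>
    div_pos (Gamma_pos_of_pos (by linarith)) (Gamma_pos_of_pos hx)
  have hlog : ∀ {x : ℝ}, 0 < x →
      log (Gamma (x + q) / Gamma x) = fwdDiff q (log ∘ Gamma) x := fun hx =>
    log_div (Gamma_pos_of_pos (by linarith)).ne' (Gamma_pos_of_pos hx).ne'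
  rw [← log_lt_log_iff (hΓ ht) (hΓ hs), hlog ht, hlog hs]
  exact strictConvexOn_log_Gamma.fwdDiff_lt ht (show 0 < s + q by linarith) hts hq

end Real

/-- For every `q > 0`, the sequence `n ↦ Γ(qn+1)/Γ(q(n−1)+1)` is strictly increasing
on the positive integers: for `1 ≤ m < n`,
`Γ(qm+1)/Γ(q(m−1)+1) < Γ(qn+1)/Γ(q(n−1)+1)`.  Here `Γ` is the real Gamma function. -/
theorem ml_nq_strictMono (q : ℝ) (hq : 0 < q) (m n : ℕ) (hm : 1 ≤ m) (hmn : m < n) :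
    Real.Gamma (q * (m : ℝ) + 1) / Real.Gamma (q * ((m : ℝ) - 1) + 1) <
      Real.Gamma (q * (n : ℝ) + 1) / Real.Gamma (q * ((n : ℝ) - 1) + 1) := by
  have hm' : (1 : ℝ) ≤ m := by exact_mod_cast hm
  have hmn' : (m : ℝ) < n := by exact_mod_cast hmn
  have key := Real.Gamma_add_div_Gamma_strictMonoOn hq
    (show 0 < q * ((m : ℝ) - 1) + 1 by nlinarith)
    (show 0 < q * ((n : ℝ) - 1) + 1 by nlinarith)
    (show q * ((m : ℝ) - 1) + 1 < q * ((n : ℝ) - 1) + 1 by nlinarith)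
  have shift : ∀ k : ℝ, q * (k - 1) + 1 + q = q * k + 1 := fun k => by ring
  simpa only [shift] using key
end

section
/- For every q > 0, the function f_q : [1,∞) → ℝ defined by f_q(x) = Γ(qx+1)/Γ(q(x−1)+1) is strictly monotonically increasing: for all real 1 ≤ x < y, f_q(x) < f_q(y). -/
open Filter Topology Finset

private lemma gamma_ratio_lt (q u v : ℝ) (hq : 0 < q) (hu : 0 < u) (huv : u < v) :
    Real.Gamma (u + q) / Real.Gamma u < Real.Gamma (v + q) / Real.Gamma v := by
  have hv : 0 < v := hu.trans huv
  set c : ℕ → ℝ := fun i => ((v + i) * (u + q + i)) / ((v + q + i) * (u + i)) with hc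
  have hpos : ∀ (s : ℝ), 0 < s → ∀ i : ℕ, (0:ℝ) < s + i := fun s hs i => by positivity
  have hc1 : ∀ i : ℕ, 1 < c i := by
    intro i
    rw [hc]
    rw [one_lt_div (by positivity)]
    nlinarith [mul_pos (sub_pos.mpr huv) hq]
  set A : ℕ → ℝ := fun n =>
    (Real.GammaSeq (v + q) n * Real.GammaSeq u n) /
      (Real.GammaSeq v n * Real.GammaSeq (u + q) n) with hA
  have hΓpos : ∀ (s : ℝ), 0 < s → 0 < Real.Gamma s := fun s hs => Real.Gamma_pos_of_pos hs
  have hlim : Tendsto A atTop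
      (𝓝 ((Real.Gamma (v + q) * Real.Gamma u) / (Real.Gamma v * Real.Gamma (u + q)))) := by
    exact ((Real.GammaSeq_tendsto_Gamma _).mul (Real.GammaSeq_tendsto_Gamma _)).div
      ((Real.GammaSeq_tendsto_Gamma _).mul (Real.GammaSeq_tendsto_Gamma _))
      (ne_of_gt (mul_pos (hΓpos _ hv) (hΓpos _ (by linarith))))
  have hform : ∀ n : ℕ, 1 ≤ n → A n = ∏ i ∈ Finset.range (n + 1), c i := by
    intro n hn
    have hn0 : (0:ℝ) < (n:ℝ) := by exact_mod_cast hn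
    have hP : ∀ (s : ℝ), 0 < s → (0:ℝ) < ∏ j ∈ Finset.range (n + 1), (s + j) :=
      fun s hs => Finset.prod_pos fun j _ => hpos s hs j
    have hfac : (0:ℝ) < (n.factorial : ℝ) := by positivity
    rw [hA, hc]
    simp only [Real.GammaSeq]
    rw [Finset.prod_div_distrib, Finset.prod_mul_distrib, Finset.prod_mul_distrib]
    have hpow : (n:ℝ) ^ (v + q) * (n:ℝ) ^ u = (n:ℝ) ^ v * (n:ℝ) ^ (u + q) := by
      rw [← Real.rpow_add hn0, ← Real.rpow_add hn0]; ring_nf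
    field_simp
    linear_combination hpow
  have hbound : ∀ᶠ n in atTop, c 0 ≤ A n := by
    filter_upwards [eventually_ge_atTop 1] with n hn
    rw [hform n hn, ← Finset.mul_prod_erase (Finset.range (n+1)) c
      (Finset.mem_range.mpr (Nat.succ_pos n))]
    have h1p : (1:ℝ) ≤ ∏ i ∈ (Finset.range (n+1)).erase 0, c i := by
      calc (1:ℝ) = ∏ i ∈ (Finset.range (n+1)).erase 0, (1:ℝ) := by simp
      _ ≤ _ := Finset.prod_le_prod (fun i _ => zero_le_one) (fun i _ => (hc1 i).le)
    exact le_mul_of_one_le_right (le_of_lt (lt_trans one_pos (hc1 0))) h1p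
  have hle : c 0 ≤ (Real.Gamma (v + q) * Real.Gamma u) / (Real.Gamma v * Real.Gamma (u + q)) :=
    ge_of_tendsto hlim hbound
  have h1 : (1:ℝ) < (Real.Gamma (v + q) * Real.Gamma u) / (Real.Gamma v * Real.Gamma (u + q)) :=
    lt_of_lt_of_le (hc1 0) hle
  rw [lt_div_iff₀ (mul_pos (hΓpos _ hv) (hΓpos _ (by linarith))), one_mul] at h1
  rw [div_lt_div_iff₀ (hΓpos _ hu) (hΓpos _ hv)]
  linarith [h1]

/-- For every `q > 0`, the function `f_q(x) = Γ(qx+1)/Γ(q(x−1)+1)` is strictly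
increasing on `[1, ∞)`: for all real `1 ≤ x < y`, `f_q(x) < f_q(y)`.
Here `Γ` is the real Gamma function. -/
theorem ml_fq_strictMonoOn (q : ℝ) (hq : 0 < q) (x y : ℝ) (hx : 1 ≤ x) (hxy : x < y) :
    Real.Gamma (q * x + 1) / Real.Gamma (q * (x - 1) + 1) <
      Real.Gamma (q * y + 1) / Real.Gamma (q * (y - 1) + 1) := by
  have hu : 0 < q * (x - 1) + 1 := by nlinarith
  have huv : q * (x - 1) + 1 < q * (y - 1) + 1 := by nlinarith
  have := gamma_ratio_lt q (q * (x - 1) + 1) (q * (y - 1) + 1) hq hu huv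
  have e1 : q * (x - 1) + 1 + q = q * x + 1 := by ring
  have e2 : q * (y - 1) + 1 + q = q * y + 1 := by ring
  rwa [e1, e2] at this
end
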